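/- Let G = ZMod 5 × ZMod 5 × ZMod 5 and X = Option G, writing ∞ for none, with G acting on X by translation (g • some x = some (x + g), g • ∞ = ∞). Let ℬ be the family of all translates of the five base blocks B1 = {(0,0,0),(0,0,1),(0,0,2),(0,0,3),(0,0,4)} ∪ {∞}, B2 = {(0,0,0),(0,1,0),(1,0,0),(1,1,1),(2,3,1),(4,3,2)}, B3 = {(0,0,0),(0,1,2),(1,2,1),(1,4,2),(2,0,0),(2,1,4)}, B4 = {(0,0,0),(0,1,3),(2,2,4),(2,4,1),(3,2,3),(3,4,3)}, B5 = {(0,0,0),(0,2,3),(2,0,3),(2,2,2),(3,1,3),(4,1,1)} (group elements embedded in X via some). Then every block of ℬ has exactly 6 elements and every pair of distinct points of X is contained in exactly one block of ℬ; that is, ℬ is a Steiner system S(2,6,126) (a unital of order 5) on X, invariant under the translation action with the single fixed point ∞. -/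

import Mathlib

/-- Translation action of `G = ZMod 5 × ZMod 5 × ZMod 5` on `Option G`:
`g • some x = some (x + g)`, `g • ∞ = ∞`. -/
def trG6 (g : ZMod 5 × ZMod 5 × ZMod 5) :
    Option (ZMod 5 × ZMod 5 × ZMod 5) → Option (ZMod 5 × ZMod 5 × ZMod 5) :=
  Option.map (fun a => a + g)

/-- The five base blocks of the difference family. -/
def baseBlocks6 : List (Finset (Option (ZMod 5 × ZMod 5 × ZMod 5))) :=
  [ {some (0, 0, 0), some (0, 0, 1), some (0, 0, 2), some (0, 0, 3), some (0, 0, 4), none},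
    {some (0, 0, 0), some (0, 1, 0), some (1, 0, 0), some (1, 1, 1), some (2, 3, 1),
     some (4, 3, 2)},
    {some (0, 0, 0), some (0, 1, 2), some (1, 2, 1), some (1, 4, 2), some (2, 0, 0),
     some (2, 1, 4)},
    {some (0, 0, 0), some (0, 1, 3), some (2, 2, 4), some (2, 4, 1), some (3, 2, 3),
     some (3, 4, 3)},
    {some (0, 0, 0), some (0, 2, 3), some (2, 0, 3), some (2, 2, 2), some (3, 1, 3),
     some (4, 1, 1)} ]

/-- The family of all translates of the base blocks. -/
def blocks6 : Set (Finset (Option (ZMod 5 × ZMod 5 × ZMod 5))) :=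
  { B | ∃ g : ZMod 5 × ZMod 5 × ZMod 5, ∃ B0 ∈ baseBlocks6, B = B0.image (trG6 g) }

/-!
The four finite base blocks form a relative difference family in `G = (ZMod 5)³` with respect to
the column subgroup `H = 0 × 0 × ZMod 5`: the `4 · 30 = |G \ H|` differences `b - a` of distinct
points of one block run through `G \ H`, each exactly once. So two points whose difference lies
outside `H` are joined by exactly one translate of a finite base block and by no translate of
`H ∪ {∞}`, while two points of one coset `x + H`, or `∞` and a point, are joined only by
`(x + H) ∪ {∞}`.
-/

open Function (Embedding)

theorem Set.mk_mem_univ_sigma_offDiag {ι α : Type*} {s : ι → Set α} {i : ι} {a b : α}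
    (ha : a ∈ s i) (hb : b ∈ s i) (hab : a ≠ b) :
    (⟨i, a, b⟩ : Σ _ : ι, α × α) ∈ Set.univ.sigma fun i => (s i).offDiag :=
  ⟨trivial, ha, hb, hab⟩

section Development

variable {G : Type*} [AddCommGroup G] [DecidableEq G]

def development (𝓑₀ : Set (Finset (Option G))) : Set (Finset (Option G)) :=
  {B | ∃ g : G, ∃ B₀ ∈ 𝓑₀, B = B₀.image (Option.map (· + g))}

theorem some_mem_image_map_add {B : Finset (Option G)} {g x : G} :
    some x ∈ B.image (Option.map (· + g)) ↔ some (x - g) ∈ B := by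
  simp only [Finset.mem_image, Option.map_eq_some_iff]
  constructor
  · rintro ⟨_, hb, a, rfl, rfl⟩
    simpa using hb
  · exact fun h => ⟨_, h, x - g, rfl, sub_add_cancel x g⟩

theorem none_mem_image_map_add {B : Finset (Option G)} {g : G} :
    none ∈ B.image (Option.map (· + g)) ↔ none ∈ B := by
  simp

theorem image_map_add_image_map_add (B : Finset (Option G)) (g h : G) :
    (B.image (Option.map (· + g))).image (Option.map (· + h)) =
      B.image (Option.map (· + (g + h))) := by
  rw [Finset.image_image, Option.map_comp_map]
  simp only [Function.comp_def, add_assoc]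

theorem card_image_map_add (B : Finset (Option G)) (g : G) :
    (B.image (Option.map (· + g))).card = B.card :=
  Finset.card_image_of_injective _ (Option.map_injective (add_left_injective g))

theorem image_map_add_mem_development {𝓑₀ : Set (Finset (Option G))} {B : Finset (Option G)}
    (hB : B ∈ development 𝓑₀) (g : G) : B.image (Option.map (· + g)) ∈ development 𝓑₀ := by
  obtain ⟨h, B₀, hB₀, rfl⟩ := hB
  exact ⟨h + g, B₀, hB₀, image_map_add_image_map_add B₀ h g⟩

end Development

section RelDiffFamily

variable {G ι : Type*} [AddCommGroup G] {H : AddSubgroup G} {D : ι → Finset G}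

def IsRelDiffFamily (H : AddSubgroup G) (D : ι → Finset G) : Prop :=
  Set.BijOn (fun t : Σ _ : ι, G × G => t.2.2 - t.2.1)
    (Set.univ.sigma fun i => (D i : Set G).offDiag) (H : Set G)ᶜ

theorem IsRelDiffFamily.sub_notMem (hD : IsRelDiffFamily H D) {i : ι} {a b : G} (ha : a ∈ D i)
    (hb : b ∈ D i) (hab : a ≠ b) : b - a ∉ H :=
  hD.mapsTo (Set.mk_mem_univ_sigma_offDiag ha hb hab)

theorem IsRelDiffFamily.eq_of_sub_eq (hD : IsRelDiffFamily H D) {i j : ι} {a b a' b' : G}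
    (ha : a ∈ D i) (hb : b ∈ D i) (ha' : a' ∈ D j) (hb' : b' ∈ D j) (hd : b - a = b' - a')
    (hd' : b - a ∉ H) : i = j ∧ a = a' ∧ b = b' := by
  have hab : a ≠ b := by rintro rfl; simp at hd'
  have ha'b' : a' ≠ b' := by rintro rfl; simp [hd] at hd'
  obtain ⟨rfl, h⟩ := Sigma.mk.inj_iff.mp <| hD.injOn (Set.mk_mem_univ_sigma_offDiag ha hb hab)
    (Set.mk_mem_univ_sigma_offDiag ha' hb' ha'b') hd
  simpa using h

theorem IsRelDiffFamily.of_image_sub_eq_compl [Fintype G] [DecidableEq G] [Fintype ι]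
    {C : Finset G} (hC : (C : Set G) = H)
    (himage : (Finset.univ.sigma fun i => (D i).offDiag).image (fun t => t.2.2 - t.2.1) = Cᶜ)
    (hcard : (Finset.univ.sigma fun i => (D i).offDiag).card = Cᶜ.card) :
    IsRelDiffFamily H D := by
  have hP : ((Finset.univ.sigma fun i => (D i).offDiag : Finset (Σ _ : ι, G × G)) : Set _) =
      Set.univ.sigma fun i => (D i : Set G).offDiag := by
    simp only [Finset.coe_sigma, Finset.coe_univ, Finset.coe_offDiag]
  have hbij := (Finset.card_image_iff.mp (himage ▸ hcard.symm)).bijOn_image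
  rwa [← Finset.coe_image, himage, Finset.coe_compl, hC, hP] at hbij

end RelDiffFamily

section RelDiffDesign

variable {G ι : Type*} [AddCommGroup G] [DecidableEq G] {H : AddSubgroup G} {C : Finset G}
  {D : ι → Finset G}

def relDiffDesign (C : Finset G) (D : ι → Finset G) : Set (Finset (Option G)) :=
  development (insert (Finset.insertNone C) (Set.range fun i => (D i).map Embedding.some))

theorem some_mem_image_map_some {S : Finset G} {g x : G} :
    some x ∈ (S.map Embedding.some).image (Option.map (· + g)) ↔ x - g ∈ S := by
  rw [some_mem_image_map_add, Finset.mem_map, Embedding.some_apply]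
  simp

theorem none_notMem_image_map_some (S : Finset G) (g : G) :
    none ∉ (S.map Embedding.some).image (Option.map (· + g)) := by
  simp

theorem some_mem_image_insertNone (hC : (C : Set G) = H) {g x : G} :
    some x ∈ (Finset.insertNone C).image (Option.map (· + g)) ↔ x - g ∈ H := by
  rw [some_mem_image_map_add, Finset.some_mem_insertNone, ← Finset.mem_coe, hC, SetLike.mem_coe]

theorem image_insertNone_eq (hC : (C : Set G) = H) {g g' : G} (h : g - g' ∈ H) :
    (Finset.insertNone C).image (Option.map (· + g)) =
      (Finset.insertNone C).image (Option.map (· + g')) := by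
  ext (_ | x)
  · simp only [none_mem_image_map_add]
  · rw [some_mem_image_insertNone hC, some_mem_image_insertNone hC]
    exact ⟨fun hx => by simpa using H.add_mem hx h, fun hx => by simpa using H.sub_mem hx h⟩

theorem existsUnique_block_none_some (hC : (C : Set G) = H) (x : G) :
    ∃! B, B ∈ relDiffDesign C D ∧ none ∈ B ∧ some x ∈ B := by
  refine ⟨(Finset.insertNone C).image (Option.map (· + x)),
    ⟨⟨x, _, Set.mem_insert _ _, rfl⟩, ?_, ?_⟩, ?_⟩
  · simp
  · simp [some_mem_image_insertNone hC]
  · rintro _ ⟨⟨g, _, rfl | ⟨i, rfl⟩, rfl⟩, hnone, hx⟩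
    · rw [some_mem_image_insertNone hC] at hx
      exact image_insertNone_eq hC (by simpa using H.neg_mem hx)
    · exact absurd hnone (none_notMem_image_map_some _ _)

theorem existsUnique_block_some_some_of_sub_mem (hC : (C : Set G) = H)
    (hD : IsRelDiffFamily H D) {x y : G} (hxy : x ≠ y) (h : y - x ∈ H) :
    ∃! B, B ∈ relDiffDesign C D ∧ some x ∈ B ∧ some y ∈ B := by
  refine ⟨(Finset.insertNone C).image (Option.map (· + x)),
    ⟨⟨x, _, Set.mem_insert _ _, rfl⟩, ?_, ?_⟩, ?_⟩
  · simp [some_mem_image_insertNone hC]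
  · rwa [some_mem_image_insertNone hC]
  · rintro _ ⟨⟨g, _, rfl | ⟨i, rfl⟩, rfl⟩, hx, hy⟩
    · rw [some_mem_image_insertNone hC] at hx
      exact image_insertNone_eq hC (by simpa using H.neg_mem hx)
    · rw [some_mem_image_map_some] at hx hy
      exact absurd (by simpa using h) (hD.sub_notMem hx hy (by simpa using hxy))

theorem existsUnique_block_some_some_of_sub_notMem (hC : (C : Set G) = H)
    (hD : IsRelDiffFamily H D) {x y : G} (h : y - x ∉ H) :
    ∃! B, B ∈ relDiffDesign C D ∧ some x ∈ B ∧ some y ∈ B := by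
  obtain ⟨⟨i, a, b⟩, ⟨-, ha, hb, -⟩, hab : b - a = y - x⟩ := hD.surjOn h
  change a ∈ D i at ha
  change b ∈ D i at hb
  refine ⟨((D i).map Embedding.some).image (Option.map (· + (x - a))),
    ⟨⟨x - a, _, Or.inr ⟨i, rfl⟩, rfl⟩, ?_, ?_⟩, ?_⟩
  · rwa [some_mem_image_map_some, sub_sub_cancel]
  · rwa [some_mem_image_map_some, ← sub_add, ← hab, sub_add_cancel]
  · rintro _ ⟨⟨g, _, rfl | ⟨j, rfl⟩, rfl⟩, hx, hy⟩
    · rw [some_mem_image_insertNone hC] at hx hy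
      exact absurd (by simpa using H.sub_mem hy hx) h
    · rw [some_mem_image_map_some] at hx hy
      obtain ⟨rfl, hxa, -⟩ := hD.eq_of_sub_eq ha hb hx hy (by simpa using hab) (hab ▸ h)
      rw [hxa, sub_sub_cancel]

theorem IsRelDiffFamily.existsUnique_block (hD : IsRelDiffFamily H D) (hC : (C : Set G) = H)
    {p q : Option G} (hpq : p ≠ q) : ∃! B, B ∈ relDiffDesign C D ∧ p ∈ B ∧ q ∈ B := by
  match p, q with
  | none, none => exact absurd rfl hpq
  | none, some x => exact existsUnique_block_none_some hC x
  | some x, none =>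
    simpa only [and_comm (a := some x ∈ _)] using existsUnique_block_none_some (D := D) hC x
  | some x, some y =>
    by_cases h : y - x ∈ H
    · exact existsUnique_block_some_some_of_sub_mem hC hD (by simpa using hpq) h
    · exact existsUnique_block_some_some_of_sub_notMem hC hD h

end RelDiffDesign

def columnSubgroup : AddSubgroup (ZMod 5 × ZMod 5 × ZMod 5) :=
  AddSubgroup.prod ⊥ (AddSubgroup.prod ⊥ ⊤)

def columnBlock : Finset (ZMod 5 × ZMod 5 × ZMod 5) :=
  {(0, 0, 0), (0, 0, 1), (0, 0, 2), (0, 0, 3), (0, 0, 4)}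

def unitalDiffFamily : Fin 4 → Finset (ZMod 5 × ZMod 5 × ZMod 5) :=
  ![{(0, 0, 0), (0, 1, 0), (1, 0, 0), (1, 1, 1), (2, 3, 1), (4, 3, 2)},
    {(0, 0, 0), (0, 1, 2), (1, 2, 1), (1, 4, 2), (2, 0, 0), (2, 1, 4)},
    {(0, 0, 0), (0, 1, 3), (2, 2, 4), (2, 4, 1), (3, 2, 3), (3, 4, 3)},
    {(0, 0, 0), (0, 2, 3), (2, 0, 3), (2, 2, 2), (3, 1, 3), (4, 1, 1)}]

theorem coe_columnBlock : (columnBlock : Set (ZMod 5 × ZMod 5 × ZMod 5)) = columnSubgroup := by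
  ext ⟨a, b, c⟩
  simp only [SetLike.mem_coe, columnSubgroup, AddSubgroup.mem_prod, AddSubgroup.mem_bot,
    AddSubgroup.mem_top, and_true]
  revert a b c
  decide

set_option maxRecDepth 10000 in
theorem isRelDiffFamily_unitalDiffFamily : IsRelDiffFamily columnSubgroup unitalDiffFamily :=
  .of_image_sub_eq_compl coe_columnBlock (by decide) (by decide)

theorem baseBlocks6_eq : baseBlocks6 = Finset.insertNone columnBlock ::
    List.ofFn fun i => (unitalDiffFamily i).map Embedding.some := by
  decide

theorem card_of_mem_baseBlocks6 : ∀ B ∈ baseBlocks6, B.card = 6 := by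
  simp only [baseBlocks6_eq, List.forall_mem_cons, List.forall_mem_ofFn_iff, Finset.card_insertNone,
    Finset.card_map]
  decide

theorem blocks6_eq_relDiffDesign : blocks6 = relDiffDesign columnBlock unitalDiffFamily := by
  ext B
  simp only [blocks6, relDiffDesign, development, baseBlocks6_eq, List.mem_cons, List.mem_ofFn,
    Set.mem_insert_iff, Set.mem_range, trG6]

theorem unital_Z5cubed_design5 :
    (∀ B ∈ blocks6, B.card = 6) ∧
    (∀ p q : Option (ZMod 5 × ZMod 5 × ZMod 5), p ≠ q →
      ∃! B, B ∈ blocks6 ∧ p ∈ B ∧ q ∈ B) ∧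
    (∀ g : ZMod 5 × ZMod 5 × ZMod 5, ∀ B ∈ blocks6, B.image (trG6 g) ∈ blocks6) ∧
    (∀ g : ZMod 5 × ZMod 5 × ZMod 5, trG6 g none = none) ∧
    (∀ g : ZMod 5 × ZMod 5 × ZMod 5, g ≠ 0 →
      ∀ x : Option (ZMod 5 × ZMod 5 × ZMod 5), trG6 g x = x → x = none) := by
  refine ⟨?_, ?_, ?_, fun _ => rfl, ?_⟩
  · rintro B ⟨g, B₀, hB₀, rfl⟩
    rw [trG6, card_image_map_add, card_of_mem_baseBlocks6 B₀ hB₀]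
  · rw [blocks6_eq_relDiffDesign]
    exact fun p q => isRelDiffFamily_unitalDiffFamily.existsUnique_block coe_columnBlock
  · exact fun g B hB => image_map_add_mem_development hB g
  · rintro g hg (_ | x) hx
    · rfl
    · exact absurd (add_eq_left.mp (Option.some_inj.mp hx)) hg
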